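/- arXiv:1904.07447 — 3 statements merged into one kernel-verified Lean document; each statement's English description precedes it below -/
import Mathlib

section
/- Let Φ be a continuous monotone increasing function on I = [a,b] and let Ψ be any function defined on the interval Φ(I). A bounded function f on Φ(I) is Darboux–Stieltjes integrable with respect to Ψ on Φ(I) if and only if f ∘ Φ is Darboux–Stieltjes integrable with respect to Ψ ∘ Φ on I, and in that case ∫_{Φ(I)} f dΨ = ∫_I (f∘Φ) d(Ψ∘Φ). -/
open Set Filter

/-- `p 0, p 1, …, p n` is a partition of `[a,b]`. -/
def IsPartition (a b : ℝ) (n : ℕ) (p : ℕ → ℝ) : Prop :=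
  p 0 = a ∧ p n = b ∧ ∀ i < n, p i ≤ p (i + 1)

/-- Upper Darboux–Stieltjes sum of `f` with respect to the integrator `G` along a partition. -/
noncomputable def upperSum (f G : ℝ → ℝ) (n : ℕ) (p : ℕ → ℝ) : ℝ :=
  ∑ i ∈ Finset.range n, sSup (f '' Set.Icc (p i) (p (i + 1))) * (G (p (i + 1)) - G (p i))

/-- Lower Darboux–Stieltjes sum. -/
noncomputable def lowerSum (f G : ℝ → ℝ) (n : ℕ) (p : ℕ → ℝ) : ℝ :=
  ∑ i ∈ Finset.range n, sInf (f '' Set.Icc (p i) (p (i + 1))) * (G (p (i + 1)) - G (p i))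

def upperSums (f G : ℝ → ℝ) (a b : ℝ) : Set ℝ :=
  {s | ∃ n p, IsPartition a b n p ∧ s = upperSum f G n p}

def lowerSums (f G : ℝ → ℝ) (a b : ℝ) : Set ℝ :=
  {s | ∃ n p, IsPartition a b n p ∧ s = lowerSum f G n p}

/-- Darboux–Stieltjes integrability of `f` with respect to `G` on `[a,b]`. -/
def DSIntegrable (f G : ℝ → ℝ) (a b : ℝ) : Prop :=
  sInf (upperSums f G a b) = sSup (lowerSums f G a b)

/-- The Darboux–Stieltjes integral (the infimum of upper sums). -/
noncomputable def DSIntegral (f G : ℝ → ℝ) (a b : ℝ) : ℝ :=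
  sInf (upperSums f G a b)

/-- Oriented Darboux–Stieltjes integrability on the interval from `a` to `b`. -/
def oDSIntegrable (f G : ℝ → ℝ) (a b : ℝ) : Prop :=
  DSIntegrable f G (min a b) (max a b)

/-- Oriented Darboux–Stieltjes integral on the interval from `a` to `b`. -/
noncomputable def oDSIntegral (f G : ℝ → ℝ) (a b : ℝ) : ℝ :=
  if a ≤ b then DSIntegral f G a b else -DSIntegral f G b a

/-- `f` is bounded on `s`. -/
def BddOn (f : ℝ → ℝ) (s : Set ℝ) : Prop := ∃ M, ∀ x ∈ s, |f x| ≤ M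

/-- The oscillation of `f` on a set. -/
noncomputable def osc (f : ℝ → ℝ) (s : Set ℝ) : ℝ := sSup (f '' s) - sInf (f '' s)

/-- `v` is the Riemann–Stieltjes integral of `f` with respect to `G` on `[a,b]`,
as a limit of Riemann–Stieltjes sums as the mesh of tagged partitions tends to `0`. -/
def RSIntegralTo (f G : ℝ → ℝ) (a b v : ℝ) : Prop :=
  ∀ ε > 0, ∃ δ > 0, ∀ (n : ℕ) (p t : ℕ → ℝ), IsPartition a b n p →
    (∀ i < n, p (i + 1) - p i < δ) → (∀ i < n, t i ∈ Set.Icc (p i) (p (i + 1))) →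
    |(∑ i ∈ Finset.range n, f (t i) * (G (p (i + 1)) - G (p i))) - v| < ε

/-- Riemann–Stieltjes integrability. -/
def RSIntegrable (f G : ℝ → ℝ) (a b : ℝ) : Prop := ∃ v, RSIntegralTo f G a b v

lemma partition_mono {A B : ℝ} {n : ℕ} {p : ℕ → ℝ} (h : IsPartition A B n p) :
    ∀ i j, i ≤ j → j ≤ n → p i ≤ p j := by
  intro i j hij hjn
  induction j with
  | zero => simp_all
  | succ k ih =>
    rcases Nat.lt_or_ge i (k + 1) with h' | h'
    · exact le_trans (ih (Nat.lt_succ_iff.mp h') (le_of_lt (Nat.lt_of_lt_of_le (Nat.lt_succ_self k) hjn)))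
        (h.2.2 k (Nat.lt_of_lt_of_le (Nat.lt_succ_self k) hjn))
    · have : i = k + 1 := le_antisymm hij h'
      simp [this]

lemma partition_mem {A B : ℝ} {n : ℕ} {p : ℕ → ℝ} (h : IsPartition A B n p) :
    ∀ i ≤ n, p i ∈ Set.Icc A B := by
  intro i hi
  constructor
  · have := partition_mono h 0 i (Nat.zero_le i) hi; rwa [h.1] at this
  · have := partition_mono h i n hi le_rfl; rwa [h.2.1] at this

lemma image_Icc_eq {a b : ℝ} {Φ : ℝ → ℝ} (hΦc : ContinuousOn Φ (Set.Icc a b))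
    (hΦm : MonotoneOn Φ (Set.Icc a b)) {x y : ℝ} (hx : x ∈ Set.Icc a b)
    (hy : y ∈ Set.Icc a b) (hxy : x ≤ y) : Φ '' Set.Icc x y = Set.Icc (Φ x) (Φ y) := by
  apply Set.Subset.antisymm
  · rintro _ ⟨z, hz, rfl⟩
    have hz' : z ∈ Set.Icc a b := ⟨le_trans hx.1 hz.1, le_trans hz.2 hy.2⟩
    exact ⟨hΦm hx hz' hz.1, hΦm hz' hy hz.2⟩
  · exact intermediate_value_Icc hxy (hΦc.mono (Set.Icc_subset_Icc hx.1 hy.2))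

lemma sum_corr {a b : ℝ} {Φ : ℝ → ℝ} (hΦc : ContinuousOn Φ (Set.Icc a b))
    (hΦm : MonotoneOn Φ (Set.Icc a b)) (Ψ f : ℝ → ℝ) {n : ℕ} {p q : ℕ → ℝ}
    (hp : IsPartition a b n p) (hpq : ∀ i ≤ n, Φ (p i) = q i) :
    upperSum f Ψ n q = upperSum (f ∘ Φ) (Ψ ∘ Φ) n p ∧
    lowerSum f Ψ n q = lowerSum (f ∘ Φ) (Ψ ∘ Φ) n p := by
  have key : ∀ i ∈ Finset.range n,
      f '' Set.Icc (q i) (q (i + 1)) = (f ∘ Φ) '' Set.Icc (p i) (p (i + 1)) := by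
    intro i hi
    rw [Finset.mem_range] at hi
    rw [Set.image_comp,
      image_Icc_eq hΦc hΦm (partition_mem hp i hi.le) (partition_mem hp (i + 1) hi)
        (hp.2.2 i hi), hpq i hi.le, hpq (i + 1) hi]
  constructor <;>
  · refine Finset.sum_congr rfl fun i hi => ?_
    have hi' := Finset.mem_range.mp hi
    rw [key i hi, Function.comp_apply, Function.comp_apply, hpq i hi'.le, hpq (i + 1) hi']

/-- A monotone right inverse of `Φ`. -/
lemma exists_right_inverse {a b : ℝ} (hab : a ≤ b) {Φ : ℝ → ℝ}
    (hΦc : ContinuousOn Φ (Set.Icc a b)) (hΦm : MonotoneOn Φ (Set.Icc a b)) :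
    ∃ g : ℝ → ℝ, MonotoneOn g (Set.Icc (Φ a) (Φ b)) ∧
      ∀ y ∈ Set.Icc (Φ a) (Φ b), g y ∈ Set.Icc a b ∧ Φ (g y) = y := by
  classical
  set S : ℝ → Set ℝ := fun y => Set.Icc a b ∩ Φ ⁻¹' Set.Iic y with hS
  refine ⟨fun y => sSup (S y), ?_, ?_⟩
  · intro y hy y' hy' hyy'
    refine csSup_le_csSup ?_ ⟨a, ⟨le_rfl, hab⟩, hy.1⟩ ?_
    · exact ⟨b, fun x hx => hx.1.2⟩
    · intro x hx; exact ⟨hx.1, le_trans hx.2 hyy'⟩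
  · intro y hy
    have hne : (S y).Nonempty := ⟨a, ⟨le_rfl, hab⟩, hy.1⟩
    have hbdd : BddAbove (S y) := ⟨b, fun x hx => hx.1.2⟩
    have hclosed : IsClosed (S y) :=
      hΦc.preimage_isClosed_of_isClosed isClosed_Icc isClosed_Iic
    have hmem : sSup (S y) ∈ S y := hclosed.csSup_mem hne hbdd
    refine ⟨hmem.1, le_antisymm hmem.2 ?_⟩
    obtain ⟨x₀, hx₀, hΦx₀⟩ := intermediate_value_Icc hab hΦc hy
    have : x₀ ≤ sSup (S y) := le_csSup hbdd ⟨hx₀, le_of_eq hΦx₀⟩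
    calc y = Φ x₀ := hΦx₀.symm
    _ ≤ Φ (sSup (S y)) := hΦm hx₀ hmem.1 this

lemma exists_corr {a b : ℝ} (hab : a ≤ b) {Φ : ℝ → ℝ}
    (hΦc : ContinuousOn Φ (Set.Icc a b)) (hΦm : MonotoneOn Φ (Set.Icc a b))
    {n : ℕ} {q : ℕ → ℝ} (hq : IsPartition (Φ a) (Φ b) n q) (hn : n ≠ 0) :
    ∃ p, IsPartition a b n p ∧ ∀ i ≤ n, Φ (p i) = q i := by
  obtain ⟨g, hgm, hgs⟩ := exists_right_inverse hab hΦc hΦm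
  set p : ℕ → ℝ := fun i => if i = 0 then a else if i = n then b else g (q i) with hp
  have hmemq : ∀ i ≤ n, q i ∈ Set.Icc (Φ a) (Φ b) := partition_mem hq
  have hmemp : ∀ i ≤ n, p i ∈ Set.Icc a b := by
    intro i hi
    simp only [hp]
    split
    · exact ⟨le_rfl, hab⟩
    · split
      · exact ⟨hab, le_rfl⟩
      · exact (hgs (q i) (hmemq i hi)).1
  have hΦp : ∀ i ≤ n, Φ (p i) = q i := by
    intro i hi
    simp only [hp]
    split
    · next h => subst h; exact hq.1.symm
    · split
      · next h => subst h; exact hq.2.1.symm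
      · exact (hgs (q i) (hmemq i hi)).2
  refine ⟨p, ⟨by simp [hp], by simp [hp, hn], ?_⟩, hΦp⟩
  intro i hi
  rcases Nat.eq_zero_or_pos i with rfl | hipos
  · have : p 0 = a := by simp [hp]
    rw [this]
    exact (hmemp 1 hi).1
  · have hine : i ≠ 0 := Nat.pos_iff_ne_zero.mp hipos
    have hin : i ≠ n := Nat.ne_of_lt hi
    have hpi : p i = g (q i) := by simp [hp, hine, hin]
    rcases Nat.eq_or_lt_of_le (Nat.succ_le_of_lt hi) with h1 | h1
    · have : p (i + 1) = b := by
        show (if i + 1 = 0 then a else if i + 1 = n then b else g (q (i + 1))) = b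
        rw [if_neg (Nat.succ_ne_zero i), if_pos h1]
      rw [this, hpi]
      exact (hgs (q i) (hmemq i hi.le)).1.2
    · have hi1n : i + 1 ≠ n := Nat.ne_of_lt h1
      have : p (i + 1) = g (q (i + 1)) := by simp [hp, hi1n]
      rw [this, hpi]
      exact hgm (hmemq i hi.le) (hmemq (i + 1) hi) (hq.2.2 i hi)

lemma sums_eq {a b : ℝ} (hab : a ≤ b) {Φ : ℝ → ℝ} (Ψ f : ℝ → ℝ)
    (hΦc : ContinuousOn Φ (Set.Icc a b)) (hΦm : MonotoneOn Φ (Set.Icc a b)) :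
    upperSums f Ψ (Φ a) (Φ b) = upperSums (f ∘ Φ) (Ψ ∘ Φ) a b ∧
    lowerSums f Ψ (Φ a) (Φ b) = lowerSums (f ∘ Φ) (Ψ ∘ Φ) a b := by
  have fwd : ∀ n q, IsPartition (Φ a) (Φ b) n q →
      (∃ m p, IsPartition a b m p ∧ upperSum f Ψ n q = upperSum (f ∘ Φ) (Ψ ∘ Φ) m p ∧
        lowerSum f Ψ n q = lowerSum (f ∘ Φ) (Ψ ∘ Φ) m p) := by
    intro n q hq
    rcases Nat.eq_zero_or_pos n with rfl | hn
    · -- n = 0 : both sums are 0; use the trivial partition (a, b); note Φ a = Φ b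
      have hΦab : Φ a = Φ b := hq.1.symm.trans hq.2.1
      refine ⟨1, fun i => if i = 0 then a else b, ⟨by simp, by simp, ?_⟩, ?_, ?_⟩
      · intro i hi
        interval_cases i
        simpa using hab
      · simp [upperSum, Finset.sum_range_one, Function.comp, hΦab]
      · simp [lowerSum, Finset.sum_range_one, Function.comp, hΦab]
    · obtain ⟨p, hp, hΦp⟩ := exists_corr hab hΦc hΦm hq (Nat.pos_iff_ne_zero.mp hn)
      obtain ⟨h1, h2⟩ := sum_corr hΦc hΦm Ψ f hp hΦp
      exact ⟨n, p, hp, h1, h2⟩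
  have bwd : ∀ n p, IsPartition a b n p →
      (∃ m q, IsPartition (Φ a) (Φ b) m q ∧
        upperSum (f ∘ Φ) (Ψ ∘ Φ) n p = upperSum f Ψ m q ∧
        lowerSum (f ∘ Φ) (Ψ ∘ Φ) n p = lowerSum f Ψ m q) := by
    intro n p hp
    have hqpart : IsPartition (Φ a) (Φ b) n (Φ ∘ p) := by
      refine ⟨by simp [hp.1], by simp [hp.2.1], fun i hi => ?_⟩
      exact hΦm (partition_mem hp i hi.le) (partition_mem hp (i + 1) hi) (hp.2.2 i hi)
    obtain ⟨h1, h2⟩ := sum_corr hΦc hΦm Ψ f hp (fun i _ => rfl)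
    exact ⟨n, Φ ∘ p, hqpart, h1.symm, h2.symm⟩
  constructor <;>
  · ext s
    constructor
    · rintro ⟨n, q, hq, rfl⟩
      obtain ⟨m, p, hp, h1, h2⟩ := fwd n q hq
      first
        | exact ⟨m, p, hp, h1⟩
        | exact ⟨m, p, hp, h2⟩
    · rintro ⟨n, p, hp, rfl⟩
      obtain ⟨m, q, hq, h1, h2⟩ := bwd n p hp
      first
        | exact ⟨m, q, hq, h1⟩
        | exact ⟨m, q, hq, h2⟩

/-- substitution formula for a continuous monotone increasing `Φ`
and an arbitrary integrator `Ψ`. -/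
theorem stmt0 (a b : ℝ) (hab : a ≤ b) (Φ Ψ f : ℝ → ℝ)
    (hΦc : ContinuousOn Φ (Set.Icc a b)) (hΦm : MonotoneOn Φ (Set.Icc a b))
    (hf : BddOn f (Set.Icc (Φ a) (Φ b))) :
    (DSIntegrable f Ψ (Φ a) (Φ b) ↔ DSIntegrable (f ∘ Φ) (Ψ ∘ Φ) a b) ∧
    (DSIntegrable f Ψ (Φ a) (Φ b) →
      DSIntegral f Ψ (Φ a) (Φ b) = DSIntegral (f ∘ Φ) (Ψ ∘ Φ) a b) := by
  obtain ⟨hU, hL⟩ := sums_eq hab Ψ f hΦc hΦm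
  constructor
  · unfold DSIntegrable
    rw [hU, hL]
  · intro _
    unfold DSIntegral
    rw [hU]
end

section
/- Let φ be a bounded Riemann integrable function on I = [a,b] with indefinite integral Φ, and let ψ be a bounded Riemann integrable function on Φ(I) with indefinite integral Ψ. If f is bounded on Φ(I) and (f∘Φ)(ψ∘Φ) is Riemann–Stieltjes integrable with respect to Φ on I, then ∫_I (f∘Φ)(ψ∘Φ) dΦ = ∫_I (f∘Φ)(ψ∘Φ)·φ dx, i.e., the Stieltjes integral with respect to Φ can be computed as a Riemann integral against the density φ. -/
/-
On a cell `[xᵢ, xᵢ₊₁]` of a partition, both `φ(tᵢ) Δxᵢ` and the increment `Φ(xᵢ₊₁) - Φ(xᵢ)` of the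
indefinite integral lie between `inf φ · Δxᵢ` and `sup φ · Δxᵢ`. Hence the Riemann sums of `g φ`
against `dx` and of `g` against `dΦ` differ by at most `sup |g| · (U(φ, P) - L(φ, P))`, and by
Darboux's theorem this gap tends to `0` with the mesh because `φ` is integrable. Darboux's theorem
itself comes from cutting a fine partition at the points of a near-optimal one: each cut lowers
the upper sum by at most `2 sup |φ| · mesh`.
-/

open Set Filter

def MeshLT (n : ℕ) (p : ℕ → ℝ) (δ : ℝ) : Prop := ∀ i < n, p (i + 1) - p i < δ

noncomputable def upperTerm (f : ℝ → ℝ) (x y : ℝ) : ℝ := sSup (f '' Icc x y) * (y - x)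

theorem upperSum_id (f : ℝ → ℝ) (n : ℕ) (p : ℕ → ℝ) :
    upperSum f id n p = ∑ i ∈ Finset.range n, upperTerm f (p i) (p (i + 1)) := rfl

section Partitions

variable {a b c : ℝ} {n k r : ℕ} {p : ℕ → ℝ}

namespace IsPartition

theorem mono (hp : IsPartition a b n p) {i j : ℕ} (hij : i ≤ j) (hj : j ≤ n) : p i ≤ p j := by
  induction j, hij using Nat.le_induction with
  | base => rfl
  | succ j _ ih => exact (ih (by omega)).trans (hp.2.2 j (by omega))

theorem mem_Icc (hp : IsPartition a b n p) {i : ℕ} (hi : i ≤ n) : p i ∈ Icc a b :=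
  ⟨hp.1 ▸ hp.mono (Nat.zero_le i) hi, hp.2.1 ▸ hp.mono hi le_rfl⟩

theorem le (hp : IsPartition a b n p) : a ≤ b := hp.1 ▸ hp.2.1 ▸ hp.mono (Nat.zero_le n) le_rfl

theorem Icc_subset (hp : IsPartition a b n p) {i : ℕ} (hi : i < n) :
    Icc (p i) (p (i + 1)) ⊆ Icc a b :=
  Icc_subset_Icc (hp.mem_Icc hi.le).1 (hp.mem_Icc hi).2

theorem sum_sub_eq (hp : IsPartition a b n p) :
    ∑ i ∈ Finset.range n, (p (i + 1) - p i) = b - a := by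
  rw [Finset.sum_range_sub, hp.1, hp.2.1]

theorem single (hab : a ≤ b) : IsPartition a b 1 (fun i => if i = 0 then a else b) :=
  ⟨rfl, rfl, fun i hi => by simpa [Nat.lt_one_iff.1 hi] using hab⟩

theorem take (hp : IsPartition a b n p) (hk : k ≤ n) : IsPartition a (p k) k p :=
  ⟨hp.1, rfl, fun i hi => hp.2.2 i (by omega)⟩

theorem drop (hp : IsPartition a b (k + r) p) : IsPartition (p k) b r (fun i => p (k + i)) :=
  ⟨rfl, hp.2.1, fun i hi => hp.2.2 (k + i) (by omega)⟩

theorem snoc (hp : IsPartition a b n p) (hbc : b ≤ c) :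
    IsPartition a c (n + 1) (fun i => if i ≤ n then p i else c) := by
  refine ⟨by simp [hp.1], by simp, fun i hi => ?_⟩
  rcases Nat.lt_or_eq_of_le (Nat.lt_succ_iff.1 hi) with hi | rfl
  · simpa [hi.le, Nat.succ_le_of_lt hi] using hp.2.2 i hi
  · simpa [hp.2.1] using hbc

theorem cons (hp : IsPartition a b n p) (hca : c ≤ a) :
    IsPartition c b (n + 1) (fun i => if i = 0 then c else p (i - 1)) := by
  refine ⟨by simp, by simp [hp.2.1], fun i hi => ?_⟩
  rcases i with _ | i
  · simpa [hp.1] using hca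
  · simpa using hp.2.2 i (by omega)

end IsPartition

theorem upperSum_zero (f : ℝ → ℝ) (p : ℕ → ℝ) : upperSum f id 0 p = 0 := Finset.sum_range_zero _

theorem upperSum_succ (f : ℝ → ℝ) (p : ℕ → ℝ) (n : ℕ) :
    upperSum f id (n + 1) p = upperSum f id n p + upperTerm f (p n) (p (n + 1)) :=
  Finset.sum_range_succ _ _

theorem upperSum_add (f : ℝ → ℝ) (p : ℕ → ℝ) (k r : ℕ) :
    upperSum f id (k + r) p = upperSum f id k p + upperSum f id r (fun i => p (k + i)) :=
  Finset.sum_range_add _ k r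

theorem upperSum_snoc (f : ℝ → ℝ) (p : ℕ → ℝ) (n : ℕ) (c : ℝ) :
    upperSum f id (n + 1) (fun i => if i ≤ n then p i else c)
      = upperSum f id n p + upperTerm f (p n) c := by
  rw [upperSum_id, Finset.sum_range_succ, upperSum_id]
  congr 1
  · refine Finset.sum_congr rfl fun i hi => ?_
    have hi : i < n := Finset.mem_range.1 hi
    simp [hi.le, Nat.succ_le_of_lt hi]
  · simp

theorem upperSum_cons (f : ℝ → ℝ) (p : ℕ → ℝ) (n : ℕ) (c : ℝ) :
    upperSum f id (n + 1) (fun i => if i = 0 then c else p (i - 1))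
      = upperTerm f c (p 0) + upperSum f id n p := by
  rw [upperSum_id, Finset.sum_range_succ', add_comm]
  simp [upperSum_id]

namespace MeshLT

variable {δ : ℝ}

theorem take (h : MeshLT n p δ) (hk : k ≤ n) : MeshLT k p δ := fun i hi => h i (by omega)

theorem drop (h : MeshLT (k + r) p δ) : MeshLT r (fun i => p (k + i)) δ :=
  fun i hi => h (k + i) (by omega)

theorem snoc (h : MeshLT n p δ) (hc : c - p n < δ) :
    MeshLT (n + 1) (fun i => if i ≤ n then p i else c) δ := by
  intro i hi
  rcases Nat.lt_or_eq_of_le (Nat.lt_succ_iff.1 hi) with hi | rfl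
  · simpa [hi.le, Nat.succ_le_of_lt hi] using h i hi
  · simpa using hc

theorem cons (h : MeshLT n p δ) (hc : p 0 - c < δ) :
    MeshLT (n + 1) (fun i => if i = 0 then c else p (i - 1)) δ := by
  intro i hi
  rcases i with _ | i
  · simpa using hc
  · simpa using h i (by omega)

end MeshLT

end Partitions

section Bounds

variable {f : ℝ → ℝ} {s : Set ℝ} {a b c x y M : ℝ}

theorem BddOn.exists_nonneg (h : BddOn f s) : ∃ M, 0 ≤ M ∧ ∀ x ∈ s, |f x| ≤ M :=
  let ⟨M, hM⟩ := h
  ⟨max M 0, le_max_right _ _, fun x hx => (hM x hx).trans (le_max_left _ _)⟩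

theorem bddAbove_image_of_abs_le (hM : ∀ x ∈ s, |f x| ≤ M) : BddAbove (f '' s) :=
  ⟨M, forall_mem_image.2 fun x hx => (abs_le.1 (hM x hx)).2⟩

theorem bddBelow_image_of_abs_le (hM : ∀ x ∈ s, |f x| ≤ M) : BddBelow (f '' s) :=
  ⟨-M, forall_mem_image.2 fun x hx => (abs_le.1 (hM x hx)).1⟩

theorem le_sSup_image_of_abs_le (hM : ∀ x ∈ s, |f x| ≤ M) (hx : x ∈ s) :
    f x ≤ sSup (f '' s) :=
  le_csSup (bddAbove_image_of_abs_le hM) (mem_image_of_mem f hx)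

theorem sInf_image_le_of_abs_le (hM : ∀ x ∈ s, |f x| ≤ M) (hx : x ∈ s) :
    sInf (f '' s) ≤ f x :=
  csInf_le (bddBelow_image_of_abs_le hM) (mem_image_of_mem f hx)

theorem sSup_image_le_of_abs_le (hM : ∀ x ∈ s, |f x| ≤ M) (hs : s.Nonempty) :
    sSup (f '' s) ≤ M :=
  csSup_le (hs.image f) (forall_mem_image.2 fun x hx => (abs_le.1 (hM x hx)).2)

theorem neg_le_sSup_image_of_abs_le (hM : ∀ x ∈ s, |f x| ≤ M) (hx : x ∈ s) :
    -M ≤ sSup (f '' s) :=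
  (abs_le.1 (hM x hx)).1.trans (le_sSup_image_of_abs_le hM hx)

theorem upperTerm_split (hM : ∀ z ∈ Icc x y, |f z| ≤ M) (hxc : x ≤ c) (hcy : c ≤ y) :
    upperTerm f x c + upperTerm f c y ≤ upperTerm f x y ∧
      upperTerm f x y ≤ upperTerm f x c + upperTerm f c y + 2 * M * (y - x) := by
  have hc : c ∈ Icc x y := ⟨hxc, hcy⟩
  have hbdd := bddAbove_image_of_abs_le hM
  have hS₁ : sSup (f '' Icc x c) ≤ sSup (f '' Icc x y) :=
    csSup_le_csSup hbdd (Set.nonempty_Icc.2 hxc |>.image f) (image_mono (Icc_subset_Icc_right hcy))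
  have hS₂ : sSup (f '' Icc c y) ≤ sSup (f '' Icc x y) :=
    csSup_le_csSup hbdd (Set.nonempty_Icc.2 hcy |>.image f) (image_mono (Icc_subset_Icc_left hxc))
  have hS : sSup (f '' Icc x y) ≤ M := sSup_image_le_of_abs_le hM ⟨c, hc⟩
  have hM₁ : -M ≤ sSup (f '' Icc x c) :=
    neg_le_sSup_image_of_abs_le (fun z hz => hM z (Icc_subset_Icc_right hcy hz)) ⟨hxc, le_rfl⟩
  have hM₂ : -M ≤ sSup (f '' Icc c y) :=
    neg_le_sSup_image_of_abs_le (fun z hz => hM z (Icc_subset_Icc_left hxc hz)) ⟨le_rfl, hcy⟩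
  have h₁ := mul_le_mul_of_nonneg_right hS₁ (sub_nonneg.2 hxc)
  have h₂ := mul_le_mul_of_nonneg_right hS₂ (sub_nonneg.2 hcy)
  have h₃ := mul_le_mul_of_nonneg_right hS (sub_nonneg.2 (hxc.trans hcy))
  have h₄ := mul_le_mul_of_nonneg_right hM₁ (sub_nonneg.2 hxc)
  have h₅ := mul_le_mul_of_nonneg_right hM₂ (sub_nonneg.2 hcy)
  unfold upperTerm
  constructor <;> nlinarith

theorem upperSum_le_sSup_image_mul {n : ℕ} {p : ℕ → ℝ} (hM : ∀ z ∈ Icc a b, |f z| ≤ M)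
    (hp : IsPartition a b n p) : upperSum f id n p ≤ sSup (f '' Icc a b) * (b - a) := by
  rw [upperSum_id, ← hp.sum_sub_eq, Finset.mul_sum]
  refine Finset.sum_le_sum fun i hi => ?_
  have hi := Finset.mem_range.1 hi
  refine mul_le_mul_of_nonneg_right ?_ (sub_nonneg.2 (hp.2.2 i hi))
  exact csSup_le_csSup (bddAbove_image_of_abs_le hM) ((Set.nonempty_Icc.2 (hp.2.2 i hi)).image f)
    (image_mono (hp.Icc_subset hi))

theorem sInf_image_mul_le_upperSum {n : ℕ} {p : ℕ → ℝ} (hM : ∀ z ∈ Icc a b, |f z| ≤ M)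
    (hp : IsPartition a b n p) : sInf (f '' Icc a b) * (b - a) ≤ upperSum f id n p := by
  rw [upperSum_id, ← hp.sum_sub_eq, Finset.mul_sum]
  refine Finset.sum_le_sum fun i hi => ?_
  have hi := Finset.mem_range.1 hi
  have hpi : p i ∈ Icc (p i) (p (i + 1)) := ⟨le_rfl, hp.2.2 i hi⟩
  refine mul_le_mul_of_nonneg_right ?_ (sub_nonneg.2 (hp.2.2 i hi))
  exact (sInf_image_le_of_abs_le hM (hp.Icc_subset hi hpi)).trans
    (le_sSup_image_of_abs_le (fun z hz => hM z (hp.Icc_subset hi hz)) hpi)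

end Bounds

section Split

variable {f : ℝ → ℝ} {a b c M : ℝ} {n : ℕ} {p : ℕ → ℝ}

theorem IsPartition.exists_mem_Icc (hp : IsPartition a b n p) (hn : 0 < n) (hc : c ∈ Icc a b) :
    ∃ k < n, c ∈ Icc (p k) (p (k + 1)) := by
  classical
  have hex : ∃ k, c ≤ p (k + 1) := ⟨n - 1, by rw [Nat.sub_add_cancel hn, hp.2.1]; exact hc.2⟩
  refine ⟨Nat.find hex, ?_, ?_, Nat.find_spec hex⟩
  · have := Nat.find_min' hex (m := n - 1) (by rw [Nat.sub_add_cancel hn, hp.2.1]; exact hc.2)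
    omega
  · rcases h : Nat.find hex with _ | j
    · simpa [hp.1] using hc.1
    · exact (not_le.1 (Nat.find_min hex (h ▸ j.lt_succ_self))).le

theorem IsPartition.exists_split (hp : IsPartition a b n p) (hc : c ∈ Icc a b)
    (hM : ∀ x ∈ Icc a b, |f x| ≤ M) :
    ∃ n₁ p₁ n₂ p₂, IsPartition a c n₁ p₁ ∧ IsPartition c b n₂ p₂ ∧
      upperSum f id n₁ p₁ + upperSum f id n₂ p₂ ≤ upperSum f id n p ∧
      ∀ δ > 0, MeshLT n p δ → MeshLT n₁ p₁ δ ∧ MeshLT n₂ p₂ δ ∧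
        upperSum f id n p ≤ upperSum f id n₁ p₁ + upperSum f id n₂ p₂ + 2 * M * δ := by
  have hM₀ : 0 ≤ M := (abs_nonneg _).trans (hM c hc)
  rcases Nat.eq_zero_or_pos n with rfl | hn
  · obtain rfl : c = a := le_antisymm (hc.2.trans (hp.2.1.symm.trans hp.1).le) hc.1
    refine ⟨0, p, 0, p, ⟨hp.1, hp.1, nofun⟩, hp, by simp [upperSum_zero],
      fun δ hδ _ => ⟨nofun, nofun, ?_⟩⟩
    simp only [upperSum_zero, zero_add]
    positivity
  obtain ⟨k, hk, hck⟩ := hp.exists_mem_Icc hn hc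
  obtain ⟨r, rfl⟩ : ∃ r, n = k + 1 + r := ⟨n - (k + 1), by omega⟩
  have hsub := hp.Icc_subset hk
  obtain ⟨hdrop, hraise⟩ := upperTerm_split (fun z hz => hM z (hsub hz)) hck.1 hck.2
  have hsum : upperSum f id (k + 1 + r) p = upperSum f id k p + upperTerm f (p k) (p (k + 1))
      + upperSum f id r (fun i => p (k + 1 + i)) := by
    rw [upperSum_add, upperSum_succ]
  refine ⟨k + 1, _, r + 1, _, (hp.take (by omega)).snoc hck.1, hp.drop.cons hck.2, ?_,
    fun δ _ hmesh => ⟨(hmesh.take (by omega)).snoc ?_, hmesh.drop.cons ?_, ?_⟩⟩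
  · rw [upperSum_snoc, upperSum_cons f (fun i => p (k + 1 + i)), hsum]
    linarith
  · linarith [hmesh k hk, hck.2]
  · linarith [hmesh k hk, hck.1]
  · rw [upperSum_snoc, upperSum_cons f (fun i => p (k + 1 + i)), hsum]
    nlinarith [hmesh k hk]

end Split

section Darboux

variable {f : ℝ → ℝ} {a b M : ℝ}

/-- Cutting `p` successively at the points of `q` costs at most `2 M δ` per point. -/
theorem upperSum_le_upperSum_add_of_meshLT {m n : ℕ} {p q : ℕ → ℝ} {δ : ℝ}
    (hM : ∀ x ∈ Icc a b, |f x| ≤ M) (hq : IsPartition a b m q) (hp : IsPartition a b n p)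
    (hδ : 0 < δ) (hmesh : MeshLT n p δ) :
    upperSum f id n p ≤ upperSum f id m q + 2 * M * δ * m := by
  induction m generalizing b n p with
  | zero =>
    obtain rfl : b = a := hq.2.1.symm.trans hq.1
    simpa [upperSum_zero] using upperSum_le_sSup_image_mul hM hp
  | succ m ih =>
    have hc := hq.mem_Icc m.le_succ
    obtain ⟨n₁, p₁, n₂, p₂, hp₁, hp₂, -, hcut⟩ := hp.exists_split hc hM
    obtain ⟨hmesh₁, -, hU⟩ := hcut δ hδ hmesh
    have h₁ := ih (fun x hx => hM x (Icc_subset_Icc_right hc.2 hx)) (hq.take m.le_succ) hp₁ hmesh₁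
    have h₂ := upperSum_le_sSup_image_mul (fun x hx => hM x (Icc_subset_Icc_left hc.1 hx)) hp₂
    rw [upperSum_succ, hq.2.1]
    push_cast
    unfold upperTerm
    linarith

theorem upperSums_nonempty (f : ℝ → ℝ) (hab : a ≤ b) : (upperSums f id a b).Nonempty :=
  ⟨_, 1, _, IsPartition.single hab, rfl⟩

theorem upperSums_bddBelow (hM : ∀ x ∈ Icc a b, |f x| ≤ M) : BddBelow (upperSums f id a b) :=
  ⟨_, by rintro _ ⟨n, p, hp, rfl⟩; exact sInf_image_mul_le_upperSum hM hp⟩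

theorem DSIntegral_le_upperSum {n : ℕ} {p : ℕ → ℝ} (hM : ∀ x ∈ Icc a b, |f x| ≤ M)
    (hp : IsPartition a b n p) : DSIntegral f id a b ≤ upperSum f id n p :=
  csInf_le (upperSums_bddBelow hM) ⟨n, p, hp, rfl⟩

/-- Darboux's theorem. -/
theorem upperSum_lt_DSIntegral_add (hM : ∀ x ∈ Icc a b, |f x| ≤ M) {ε : ℝ} (hε : 0 < ε) :
    ∃ δ > 0, ∀ n p, IsPartition a b n p → MeshLT n p δ →
      upperSum f id n p < DSIntegral f id a b + ε := by
  rcases lt_or_ge b a with hba | hab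
  · exact ⟨1, one_pos, fun n p hp _ => absurd hp.le hba.not_ge⟩
  have hM₀ : 0 ≤ M := (abs_nonneg _).trans (hM a ⟨le_rfl, hab⟩)
  obtain ⟨_, ⟨m, q, hq, rfl⟩, hqε⟩ :=
    exists_lt_of_csInf_lt (upperSums_nonempty f hab) (lt_add_of_pos_right _ (half_pos hε))
  refine ⟨ε / (2 * (2 * M * m + 1)), by positivity, fun n p hp hmesh => ?_⟩
  have hcost : 2 * M * (ε / (2 * (2 * M * m + 1))) * m ≤ ε / 2 := by
    rw [show 2 * M * (ε / (2 * (2 * M * m + 1))) * m = ε / 2 * (2 * M * m / (2 * M * m + 1)) by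
      field_simp]
    exact mul_le_of_le_one_right (by positivity) ((div_le_one (by positivity)).2 (by linarith))
  have := upperSum_le_upperSum_add_of_meshLT hM hq hp (by positivity) hmesh
  unfold DSIntegral
  linarith

end Darboux

section LowerSums

variable {f : ℝ → ℝ} {a b M : ℝ}

theorem lowerSum_eq_neg_upperSum_neg (f : ℝ → ℝ) (n : ℕ) (p : ℕ → ℝ) :
    lowerSum f id n p = -upperSum (-f) id n p := by
  rw [upperSum_id, lowerSum, ← Finset.sum_neg_distrib]
  refine Finset.sum_congr rfl fun i _ => ?_
  rw [upperTerm, Real.sInf_def, ← image_neg_eq_neg, image_image]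
  simp [neg_mul]

theorem lowerSums_eq_neg_upperSums_neg (f : ℝ → ℝ) (a b : ℝ) :
    lowerSums f id a b = -upperSums (-f) id a b := by
  ext s
  simp only [lowerSums, upperSums, Set.mem_neg, mem_ofPred_eq, lowerSum_eq_neg_upperSum_neg,
    neg_eq_iff_eq_neg]

theorem DSIntegrable.upperSum_sub_lowerSum_lt (hi : DSIntegrable f id a b)
    (hM : ∀ x ∈ Icc a b, |f x| ≤ M) {ε : ℝ} (hε : 0 < ε) :
    ∃ δ > 0, ∀ n p, IsPartition a b n p → MeshLT n p δ →
      upperSum f id n p - lowerSum f id n p < ε := by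
  have hM' : ∀ x ∈ Icc a b, |(-f) x| ≤ M := fun x hx => by simpa using hM x hx
  obtain ⟨δ₁, hδ₁, h₁⟩ := upperSum_lt_DSIntegral_add hM (half_pos hε)
  obtain ⟨δ₂, hδ₂, h₂⟩ := upperSum_lt_DSIntegral_add hM' (half_pos hε)
  have hneg : DSIntegral f id a b = -DSIntegral (-f) id a b := by
    rw [DSIntegral, hi, lowerSums_eq_neg_upperSums_neg, DSIntegral, Real.sInf_def, neg_neg]
  refine ⟨min δ₁ δ₂, lt_min hδ₁ hδ₂, fun n p hp hmesh => ?_⟩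
  have hU₁ := h₁ n p hp fun i hi => (hmesh i hi).trans_le (min_le_left _ _)
  have hU₂ := h₂ n p hp fun i hi => (hmesh i hi).trans_le (min_le_right _ _)
  rw [lowerSum_eq_neg_upperSum_neg]
  linarith

end LowerSums

section Primitive

variable {f Φ : ℝ → ℝ} {a b x y M : ℝ}

theorem sInf_image_mul_le_DSIntegral_sub (hM : ∀ z ∈ Icc a b, |f z| ≤ M) (hax : a ≤ x)
    (hxy : x ≤ y) (hyb : y ≤ b) :
    sInf (f '' Icc x y) * (y - x) ≤ DSIntegral f id a y - DSIntegral f id a x := by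
  rw [le_sub_iff_add_le']
  refine le_csInf (upperSums_nonempty f (hax.trans hxy)) ?_
  rintro _ ⟨n, p, hp, rfl⟩
  have hMy : ∀ z ∈ Icc a y, |f z| ≤ M := fun z hz => hM z ⟨hz.1, hz.2.trans hyb⟩
  obtain ⟨n₁, p₁, n₂, p₂, hp₁, hp₂, hcut, -⟩ := hp.exists_split ⟨hax, hxy⟩ hMy
  have h₁ := DSIntegral_le_upperSum (fun z hz => hMy z ⟨hz.1, hz.2.trans hxy⟩) hp₁
  have h₂ := sInf_image_mul_le_upperSum (fun z hz => hMy z ⟨hax.trans hz.1, hz.2⟩) hp₂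
  linarith

theorem DSIntegral_sub_le_sSup_image_mul (hM : ∀ z ∈ Icc a b, |f z| ≤ M) (hax : a ≤ x)
    (hxy : x ≤ y) (hyb : y ≤ b) :
    DSIntegral f id a y - DSIntegral f id a x ≤ sSup (f '' Icc x y) * (y - x) := by
  rw [sub_le_iff_le_add', ← sub_le_iff_le_add]
  refine le_csInf (upperSums_nonempty f hax) ?_
  rintro _ ⟨n, p, hp, rfl⟩
  have h := DSIntegral_le_upperSum (fun z hz => hM z ⟨hz.1, hz.2.trans hyb⟩) (hp.snoc hxy)
  rw [upperSum_snoc, hp.2.1] at h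
  unfold upperTerm at h
  linarith

def IsDarbouxPrimitive (f Φ : ℝ → ℝ) (a b : ℝ) : Prop :=
  ∀ x y, a ≤ x → x ≤ y → y ≤ b →
    Φ y - Φ x ∈ Icc (sInf (f '' Icc x y) * (y - x)) (sSup (f '' Icc x y) * (y - x))

theorem isDarbouxPrimitive_DSIntegral (hM : ∀ z ∈ Icc a b, |f z| ≤ M) :
    IsDarbouxPrimitive f (DSIntegral f id a) a b := fun _ _ hax hxy hyb =>
  ⟨sInf_image_mul_le_DSIntegral_sub hM hax hxy hyb, DSIntegral_sub_le_sSup_image_mul hM hax hxy hyb⟩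

theorem IsDarbouxPrimitive.abs_sub_le (hΦ : IsDarbouxPrimitive f Φ a b)
    (hM : ∀ z ∈ Icc a b, |f z| ≤ M) (hx : x ∈ Icc a b) : |Φ x - Φ a| ≤ M * (x - a) := by
  have hMx : ∀ z ∈ Icc a x, |f z| ≤ M := fun z hz => hM z ⟨hz.1, hz.2.trans hx.2⟩
  have hax : a ∈ Icc a x := ⟨le_rfl, hx.1⟩
  have hsup := sSup_image_le_of_abs_le hMx ⟨a, hax⟩
  have hinf : -M ≤ sInf (f '' Icc a x) :=
    le_csInf (Set.nonempty_Icc.2 hx.1 |>.image f)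
      (forall_mem_image.2 fun z hz => (abs_le.1 (hMx z hz)).1)
  obtain ⟨hlo, hhi⟩ := hΦ a x le_rfl hx.1 hx.2
  have hlen : 0 ≤ x - a := sub_nonneg.2 hx.1
  rw [abs_le]
  constructor <;> nlinarith

theorem IsDarbouxPrimitive.mapsTo (hΦ : IsDarbouxPrimitive f Φ a b)
    (hM : ∀ z ∈ Icc a b, |f z| ≤ M) :
    MapsTo Φ (Icc a b) (Icc (sInf (Φ '' Icc a b)) (sSup (Φ '' Icc a b))) := by
  have hΦM : ∀ x ∈ Icc a b, |Φ x| ≤ |Φ a| + M * (b - a) := fun x hx => by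
    have hM₀ : 0 ≤ M := (abs_nonneg _).trans (hM x hx)
    have := hΦ.abs_sub_le hM hx
    have := abs_sub_abs_le_abs_sub (Φ x) (Φ a)
    nlinarith [hx.2]
  exact fun x hx => ⟨csInf_le (bddBelow_image_of_abs_le hΦM) (mem_image_of_mem Φ hx),
    le_csSup (bddAbove_image_of_abs_le hΦM) (mem_image_of_mem Φ hx)⟩

end Primitive

section Density

variable {g φ Φ : ℝ → ℝ} {a b v K M : ℝ}

theorem IsDarbouxPrimitive.abs_sum_sub_sum_le (hΦ : IsDarbouxPrimitive φ Φ a b)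
    (hg : ∀ x ∈ Icc a b, |g x| ≤ K) (hM : ∀ x ∈ Icc a b, |φ x| ≤ M) {n : ℕ} {p t : ℕ → ℝ}
    (hp : IsPartition a b n p) (ht : ∀ i < n, t i ∈ Icc (p i) (p (i + 1))) :
    |∑ i ∈ Finset.range n, g (t i) * φ (t i) * (p (i + 1) - p i)
        - ∑ i ∈ Finset.range n, g (t i) * (Φ (p (i + 1)) - Φ (p i))|
      ≤ K * (upperSum φ id n p - lowerSum φ id n p) := by
  rw [← Finset.sum_sub_distrib, lowerSum, upperSum, ← Finset.sum_sub_distrib, Finset.mul_sum]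
  simp only [id]
  refine (Finset.abs_sum_le_sum_abs _ _).trans (Finset.sum_le_sum fun i hi => ?_)
  have hi := Finset.mem_range.1 hi
  have hsub := hp.Icc_subset hi
  have hMi : ∀ x ∈ Icc (p i) (p (i + 1)), |φ x| ≤ M := fun x hx => hM x (hsub hx)
  have hlen : 0 ≤ p (i + 1) - p i := sub_nonneg.2 (hp.2.2 i hi)
  obtain ⟨hlo, hhi⟩ := hΦ _ _ (hp.mem_Icc hi.le).1 (hp.2.2 i hi) (hp.mem_Icc hi).2
  have hφt : |φ (t i) * (p (i + 1) - p i) - (Φ (p (i + 1)) - Φ (p i))|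
      ≤ sSup (φ '' Icc (p i) (p (i + 1))) * (p (i + 1) - p i)
        - sInf (φ '' Icc (p i) (p (i + 1))) * (p (i + 1) - p i) :=
    abs_sub_le_of_le_of_le
      (mul_le_mul_of_nonneg_right (sInf_image_le_of_abs_le hMi (ht i hi)) hlen)
      (mul_le_mul_of_nonneg_right (le_sSup_image_of_abs_le hMi (ht i hi)) hlen) hlo hhi
  calc |g (t i) * φ (t i) * (p (i + 1) - p i) - g (t i) * (Φ (p (i + 1)) - Φ (p i))|
      = |g (t i)| * |φ (t i) * (p (i + 1) - p i) - (Φ (p (i + 1)) - Φ (p i))| := by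
        rw [← abs_mul]; ring_nf
    _ ≤ K * (sSup (φ '' Icc (p i) (p (i + 1))) * (p (i + 1) - p i)
        - sInf (φ '' Icc (p i) (p (i + 1))) * (p (i + 1) - p i)) :=
      mul_le_mul (hg _ (hsub (ht i hi))) hφt (abs_nonneg _)
        ((abs_nonneg _).trans (hg _ (hsub (ht i hi))))

theorem RSIntegralTo.mul_density (h : RSIntegralTo g Φ a b v) (hg : BddOn g (Icc a b))
    (hφ : BddOn φ (Icc a b)) (hφi : DSIntegrable φ id a b) (hΦ : IsDarbouxPrimitive φ Φ a b) :
    RSIntegralTo (fun x => g x * φ x) id a b v := by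
  obtain ⟨K, hK, hgK⟩ := hg.exists_nonneg
  obtain ⟨M, hM⟩ := hφ
  intro ε hε
  obtain ⟨δ₁, hδ₁, h₁⟩ := h (ε / 2) (half_pos hε)
  obtain ⟨δ₂, hδ₂, h₂⟩ := hφi.upperSum_sub_lowerSum_lt hM (ε := ε / (2 * (K + 1))) (by positivity)
  refine ⟨min δ₁ δ₂, lt_min hδ₁ hδ₂, fun n p t hp hmesh ht => ?_⟩
  have hRS := h₁ n p t hp (fun i hi => (hmesh i hi).trans_le (min_le_left _ _)) ht
  have hUL := h₂ n p hp (fun i hi => (hmesh i hi).trans_le (min_le_right _ _))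
  have hdiff := hΦ.abs_sum_sub_sum_le hgK hM hp ht
  have hKε : K * (upperSum φ id n p - lowerSum φ id n p) ≤ ε / 2 :=
    calc K * (upperSum φ id n p - lowerSum φ id n p) ≤ K * (ε / (2 * (K + 1))) :=
          mul_le_mul_of_nonneg_left hUL.le hK
      _ = ε / 2 * (K / (K + 1)) := by field_simp
      _ ≤ ε / 2 :=
        mul_le_of_le_one_right (by positivity) ((div_le_one (by positivity)).2 (by linarith))
  simp only [id] at hRS ⊢
  calc _ ≤ _ := abs_sub_le _ (∑ i ∈ Finset.range n, g (t i) * (Φ (p (i + 1)) - Φ (p i))) v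
    _ < ε := by linarith

end Density

theorem stmt5_general (a b : ℝ) (φ Φ ψ f : ℝ → ℝ)
    (hφb : BddOn φ (Set.Icc a b)) (hφi : DSIntegrable φ id a b)
    (hΦ : ∀ x ∈ Set.Icc a b, Φ x = Φ a + DSIntegral φ id a x)
    (hψb : BddOn ψ (Set.Icc (sInf (Φ '' Set.Icc a b)) (sSup (Φ '' Set.Icc a b))))
    (hf : BddOn f (Set.Icc (sInf (Φ '' Set.Icc a b)) (sSup (Φ '' Set.Icc a b))))
    (v : ℝ)
    (h : RSIntegralTo (fun x => f (Φ x) * ψ (Φ x)) Φ a b v) :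
    RSIntegralTo (fun x => f (Φ x) * ψ (Φ x) * φ x) id a b v := by
  obtain ⟨M, hM⟩ := hφb
  have hprim : IsDarbouxPrimitive φ Φ a b := fun x y hax hxy hyb => by
    rw [hΦ y ⟨hax.trans hxy, hyb⟩, hΦ x ⟨hax, hxy.trans hyb⟩, add_sub_add_left_eq_sub]
    exact isDarbouxPrimitive_DSIntegral hM x y hax hxy hyb
  have hΦI := hprim.mapsTo hM
  obtain ⟨Mf, hMf⟩ := hf
  obtain ⟨Mψ, hMψ⟩ := hψb
  refine h.mul_density ⟨Mf * Mψ, fun x hx => ?_⟩ ⟨M, hM⟩ hφi hprim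
  rw [abs_mul]
  exact mul_le_mul (hMf _ (hΦI hx)) (hMψ _ (hΦI hx)) (abs_nonneg _)
    ((abs_nonneg _).trans (hMf _ (hΦI hx)))

/-- the Stieltjes integral with respect to an indefinite integral `Φ`
of `φ` can be computed as a Riemann integral against the density `φ`. -/
theorem stmt5 (a b : ℝ) (hab : a ≤ b) (φ Φ ψ Ψ f : ℝ → ℝ)
    (hφb : BddOn φ (Set.Icc a b)) (hφi : DSIntegrable φ id a b)
    (hΦ : ∀ x ∈ Set.Icc a b, Φ x = Φ a + DSIntegral φ id a x)
    (hψb : BddOn ψ (Set.Icc (sInf (Φ '' Set.Icc a b)) (sSup (Φ '' Set.Icc a b))))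
    (hψi : DSIntegrable ψ id (sInf (Φ '' Set.Icc a b)) (sSup (Φ '' Set.Icc a b)))
    (hΨ : ∀ y ∈ Set.Icc (sInf (Φ '' Set.Icc a b)) (sSup (Φ '' Set.Icc a b)),
      Ψ y = Ψ (sInf (Φ '' Set.Icc a b)) + DSIntegral ψ id (sInf (Φ '' Set.Icc a b)) y)
    (hf : BddOn f (Set.Icc (sInf (Φ '' Set.Icc a b)) (sSup (Φ '' Set.Icc a b))))
    (v : ℝ)
    (h : RSIntegralTo (fun x => f (Φ x) * ψ (Φ x)) Φ a b v) :
    RSIntegralTo (fun x => f (Φ x) * ψ (Φ x) * φ x) id a b v :=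
  stmt5_general a b φ Φ ψ f hφb hφi hΦ hψb hf v h
end

section
/- Let Φ be continuous and monotone increasing on I, let Ψ be defined on Φ(I), and suppose ψ is bounded Riemann integrable on Φ(I) with Ψ(y₂) − Ψ(y₁) = ∫_{y₁}^{y₂} ψ for all y₁ ≤ y₂ in Φ(I). Then for any bounded f on Φ(I) with |f| ≤ M_f, any partition P = {I_k} of I with induced intervals 𝓘_k = [Φ(x_{k,l}), Φ(x_{k,r})], and any ε > 0, one has U(f∘Φ, Ψ∘Φ, P) ≤ M_f·Σ_k osc(ψ, 𝓘_k)·|𝓘_k| + U((f∘Φ)(ψ∘Φ), Φ, P) + ε. -/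
open Set Filter

lemma part_mono {a b : ℝ} {n : ℕ} {p : ℕ → ℝ} (h : IsPartition a b n p)
    {i j : ℕ} (hij : i ≤ j) (hj : j ≤ n) : p i ≤ p j := by
  obtain ⟨k, rfl⟩ := Nat.exists_eq_add_of_le hij
  clear hij
  induction k with
  | zero => simp
  | succ k ih =>
    have h1 : p i ≤ p (i + k) := ih (by omega)
    have h2 : p (i + k) ≤ p (i + k + 1) := h.2.2 (i + k) (by omega)
    have : i + (k + 1) = i + k + 1 := by omega
    rw [this]; exact h1.trans h2

lemma DS_bounds (ψ : ℝ → ℝ) (c d M : ℝ) (hcd : c ≤ d)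
    (hM : ∀ x ∈ Set.Icc c d, |ψ x| ≤ M) :
    sInf (ψ '' Set.Icc c d) * (d - c) ≤ DSIntegral ψ id c d ∧
      DSIntegral ψ id c d ≤ sSup (ψ '' Set.Icc c d) * (d - c) := by
  have hba : ∀ s ⊆ Set.Icc c d, BddAbove (ψ '' s) := by
    rintro s hs
    exact ⟨M, by rintro y ⟨x, hx, rfl⟩; exact (abs_le.mp (hM x (hs hx))).2⟩
  have hbb : ∀ s ⊆ Set.Icc c d, BddBelow (ψ '' s) := by
    rintro s hs
    exact ⟨-M, by rintro y ⟨x, hx, rfl⟩; exact (abs_le.mp (hM x (hs hx))).1⟩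
  have hlow : ∀ s ∈ upperSums ψ id c d, sInf (ψ '' Set.Icc c d) * (d - c) ≤ s := by
    rintro s ⟨m, q, hq, rfl⟩
    have hmem : ∀ i ≤ m, q i ∈ Set.Icc c d := fun i hi =>
      ⟨hq.1 ▸ part_mono hq (Nat.zero_le i) hi, hq.2.1 ▸ part_mono hq hi le_rfl⟩
    have hterm : ∀ i ∈ Finset.range m,
        sInf (ψ '' Set.Icc c d) * (q (i + 1) - q i) ≤
          sSup (ψ '' Set.Icc (q i) (q (i + 1))) * (id (q (i + 1)) - id (q i)) := by
      intro i hi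
      have hi' := Finset.mem_range.mp hi
      have hqi : q i ≤ q (i + 1) := hq.2.2 i hi'
      have hsub : Set.Icc (q i) (q (i + 1)) ⊆ Set.Icc c d :=
        Set.Icc_subset_Icc (hmem i hi'.le).1 (hmem (i + 1) hi').2
      have h1 : sInf (ψ '' Set.Icc c d) ≤ ψ (q i) :=
        csInf_le (hbb _ (subset_refl _)) ⟨q i, hmem i hi'.le, rfl⟩
      have h2 : ψ (q i) ≤ sSup (ψ '' Set.Icc (q i) (q (i + 1))) :=
        le_csSup (hba _ hsub) ⟨q i, Set.left_mem_Icc.mpr hqi, rfl⟩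
      simpa using mul_le_mul_of_nonneg_right (h1.trans h2) (by linarith : (0:ℝ) ≤ q (i + 1) - q i)
    calc sInf (ψ '' Set.Icc c d) * (d - c)
        = ∑ i ∈ Finset.range m, sInf (ψ '' Set.Icc c d) * (q (i + 1) - q i) := by
          rw [← Finset.mul_sum, Finset.sum_range_sub (fun i => q i), hq.1, hq.2.1]
      _ ≤ upperSum ψ id m q := Finset.sum_le_sum hterm
  set q : ℕ → ℝ := fun i => if i = 0 then c else d with hqdef
  have hq : IsPartition c d 1 q := ⟨by simp [hqdef], by simp [hqdef], by
    intro i hi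
    interval_cases i
    simp [hqdef, hcd]⟩
  have htriv : upperSum ψ id 1 q = sSup (ψ '' Set.Icc c d) * (d - c) := by
    simp [upperSum, hqdef]
  have hmemtriv : sSup (ψ '' Set.Icc c d) * (d - c) ∈ upperSums ψ id c d :=
    ⟨1, q, hq, htriv.symm⟩
  constructor
  · exact le_csInf ⟨_, hmemtriv⟩ hlow
  · exact csInf_le ⟨_, hlow⟩ hmemtriv

set_option maxHeartbeats 1000000 in
/-- the key upper-sum estimate relating `U(f∘Φ, Ψ∘Φ, P)` to
`U((f∘Φ)(ψ∘Φ), Φ, P)` plus the oscillation of the density `ψ`. -/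
theorem stmt12 (a b : ℝ) (hab : a ≤ b) (Φ ψ Ψ f : ℝ → ℝ) (Mf : ℝ)
    (hΦc : ContinuousOn Φ (Set.Icc a b)) (hΦm : MonotoneOn Φ (Set.Icc a b))
    (hψb : BddOn ψ (Set.Icc (Φ a) (Φ b)))
    (hψi : DSIntegrable ψ id (Φ a) (Φ b))
    (hΨ : ∀ y₁ ∈ Set.Icc (Φ a) (Φ b), ∀ y₂ ∈ Set.Icc (Φ a) (Φ b), y₁ ≤ y₂ →
      Ψ y₂ - Ψ y₁ = DSIntegral ψ id y₁ y₂)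
    (hf : ∀ y ∈ Set.Icc (Φ a) (Φ b), |f y| ≤ Mf)
    (n : ℕ) (p : ℕ → ℝ) (hP : IsPartition a b n p)
    (ε : ℝ) (hε : 0 < ε) :
    upperSum (f ∘ Φ) (Ψ ∘ Φ) n p ≤
      Mf * (∑ k ∈ Finset.range n,
        osc ψ (Set.Icc (Φ (p k)) (Φ (p (k + 1)))) * (Φ (p (k + 1)) - Φ (p k)))
      + upperSum (fun x => f (Φ x) * ψ (Φ x)) Φ n p + ε := by
  obtain ⟨Mψ, hMψ⟩ := hψb
  have hΦab : Φ a ≤ Φ b :=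
    hΦm (Set.left_mem_Icc.mpr hab) (Set.right_mem_Icc.mpr hab) hab
  have hMψ0 : 0 ≤ Mψ :=
    (abs_nonneg _).trans (hMψ (Φ a) (Set.left_mem_Icc.mpr hΦab))
  have hMf0 : 0 ≤ Mf :=
    (abs_nonneg _).trans (hf (Φ a) (Set.left_mem_Icc.mpr hΦab))
  set D : ℝ := Mψ * (Φ b - Φ a) with hD
  have hD0 : 0 ≤ D := mul_nonneg hMψ0 (by linarith)
  set ε' : ℝ := ε / (D + 1) with hε'def
  have hε'0 : 0 < ε' := div_pos hε (by linarith)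
  have hmem : ∀ i ≤ n, p i ∈ Set.Icc a b := fun i hi =>
    ⟨hP.1 ▸ part_mono hP (Nat.zero_le i) hi, hP.2.1 ▸ part_mono hP hi le_rfl⟩
  have key : ∀ k ∈ Finset.range n,
      sSup ((f ∘ Φ) '' Set.Icc (p k) (p (k + 1))) * ((Ψ ∘ Φ) (p (k + 1)) - (Ψ ∘ Φ) (p k)) ≤
        Mf * (osc ψ (Set.Icc (Φ (p k)) (Φ (p (k + 1)))) * (Φ (p (k + 1)) - Φ (p k)))
        + sSup ((fun x => f (Φ x) * ψ (Φ x)) '' Set.Icc (p k) (p (k + 1)))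
            * (Φ (p (k + 1)) - Φ (p k))
        + ε' * Mψ * (Φ (p (k + 1)) - Φ (p k)) := by
    intro k hk
    have hk' := Finset.mem_range.mp hk
    have hpk := hmem k hk'.le
    have hpk1 := hmem (k + 1) hk'
    have hpp : p k ≤ p (k + 1) := hP.2.2 k hk'
    set c : ℝ := Φ (p k) with hc
    set d : ℝ := Φ (p (k + 1)) with hd
    have hcd : c ≤ d := hΦm hpk hpk1 hpp
    have hcm : c ∈ Set.Icc (Φ a) (Φ b) :=
      ⟨hΦm (Set.left_mem_Icc.mpr hab) hpk hpk.1, hΦm hpk (Set.right_mem_Icc.mpr hab) hpk.2⟩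
    have hdm : d ∈ Set.Icc (Φ a) (Φ b) :=
      ⟨hΦm (Set.left_mem_Icc.mpr hab) hpk1 hpk1.1, hΦm hpk1 (Set.right_mem_Icc.mpr hab) hpk1.2⟩
    have hsub : Set.Icc c d ⊆ Set.Icc (Φ a) (Φ b) := Set.Icc_subset_Icc hcm.1 hdm.2
    have hM' : ∀ x ∈ Set.Icc c d, |ψ x| ≤ Mψ := fun x hx => hMψ x (hsub hx)
    have hΦmaps : ∀ x ∈ Set.Icc (p k) (p (k + 1)), Φ x ∈ Set.Icc c d := by
      intro x hx
      have hxab : x ∈ Set.Icc a b := Set.Icc_subset_Icc hpk.1 hpk1.2 hx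
      exact ⟨hΦm hpk hxab hx.1, hΦm hxab hpk1 hx.2⟩
    -- the increment of Ψ equals the DS integral
    have hV : (Ψ ∘ Φ) (p (k + 1)) - (Ψ ∘ Φ) (p k) = DSIntegral ψ id c d :=
      hΨ c hcm d hdm hcd
    set V : ℝ := DSIntegral ψ id c d with hVdef
    obtain ⟨hVlo, hVhi⟩ := DS_bounds ψ c d Mψ hcd hM'
    set sS : ℝ := sSup (ψ '' Set.Icc c d) with hsSdef
    set sI : ℝ := sInf (ψ '' Set.Icc c d) with hsIdef
    have hneψ : (ψ '' Set.Icc c d).Nonempty := ⟨ψ c, c, Set.left_mem_Icc.mpr hcd, rfl⟩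
    have hbaψ : BddAbove (ψ '' Set.Icc c d) :=
      ⟨Mψ, by rintro y ⟨x, hx, rfl⟩; exact (abs_le.mp (hM' x hx)).2⟩
    have hbbψ : BddBelow (ψ '' Set.Icc c d) :=
      ⟨-Mψ, by rintro y ⟨x, hx, rfl⟩; exact (abs_le.mp (hM' x hx)).1⟩
    have hsSle : sS ≤ Mψ :=
      csSup_le hneψ (by rintro y ⟨x, hx, rfl⟩; exact (abs_le.mp (hM' x hx)).2)
    have hsIge : -Mψ ≤ sI :=
      le_csInf hneψ (by rintro y ⟨x, hx, rfl⟩; exact (abs_le.mp (hM' x hx)).1)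
    -- sup of f ∘ Φ on the subinterval
    set S : ℝ := sSup ((f ∘ Φ) '' Set.Icc (p k) (p (k + 1))) with hSdef
    have hnef : ((f ∘ Φ) '' Set.Icc (p k) (p (k + 1))).Nonempty :=
      ⟨(f ∘ Φ) (p k), p k, Set.left_mem_Icc.mpr hpp, rfl⟩
    have hbaf : BddAbove ((f ∘ Φ) '' Set.Icc (p k) (p (k + 1))) := by
      refine ⟨Mf, ?_⟩
      rintro y ⟨x, hx, rfl⟩
      exact (abs_le.mp (hf (Φ x) (hsub (hΦmaps x hx)))).2
    obtain ⟨y, hy, hyS⟩ := exists_lt_of_lt_csSup hnef (sub_lt_self S hε'0)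
    obtain ⟨ξ, hξ, rfl⟩ := hy
    have hfξS : (f ∘ Φ) ξ ≤ S := le_csSup hbaf ⟨ξ, hξ, rfl⟩
    have hξcd : Φ ξ ∈ Set.Icc c d := hΦmaps ξ hξ
    have hfξ : |f (Φ ξ)| ≤ Mf := hf (Φ ξ) (hsub hξcd)
    have hψξm : ψ (Φ ξ) ∈ ψ '' Set.Icc c d := ⟨Φ ξ, hξcd, rfl⟩
    have hψξ1 : sI ≤ ψ (Φ ξ) := csInf_le hbbψ hψξm
    have hψξ2 : ψ (Φ ξ) ≤ sS := le_csSup hbaψ hψξm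
    -- bound on the product term
    have hneg : ((fun x => f (Φ x) * ψ (Φ x)) '' Set.Icc (p k) (p (k + 1))).Nonempty :=
      ⟨f (Φ (p k)) * ψ (Φ (p k)), p k, Set.left_mem_Icc.mpr hpp, rfl⟩
    have hbag : BddAbove ((fun x => f (Φ x) * ψ (Φ x)) '' Set.Icc (p k) (p (k + 1))) := by
      refine ⟨Mf * Mψ, ?_⟩
      rintro y ⟨x, hx, rfl⟩
      have h1 := hf (Φ x) (hsub (hΦmaps x hx))
      have h2 := hM' (Φ x) (hΦmaps x hx)
      calc f (Φ x) * ψ (Φ x) ≤ |f (Φ x) * ψ (Φ x)| := le_abs_self _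
        _ = |f (Φ x)| * |ψ (Φ x)| := abs_mul _ _
        _ ≤ Mf * Mψ := mul_le_mul h1 h2 (abs_nonneg _) hMf0
    have hprod : f (Φ ξ) * ψ (Φ ξ) ≤
        sSup ((fun x => f (Φ x) * ψ (Φ x)) '' Set.Icc (p k) (p (k + 1))) :=
      le_csSup hbag ⟨ξ, hξ, rfl⟩
    -- assemble
    have hosc : osc ψ (Set.Icc c d) = sS - sI := rfl
    have hΔ0 : (0:ℝ) ≤ d - c := by linarith
    have hVabs : |V| ≤ Mψ * (d - c) := by
      rw [abs_le]
      have e1 : (-Mψ) * (d - c) ≤ sI * (d - c) := mul_le_mul_of_nonneg_right hsIge hΔ0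
      have e2 : sS * (d - c) ≤ Mψ * (d - c) := mul_le_mul_of_nonneg_right hsSle hΔ0
      have e3 : (-Mψ) * (d - c) = -(Mψ * (d - c)) := by ring
      constructor <;> linarith
    have hoscb : |V - ψ (Φ ξ) * (d - c)| ≤ (sS - sI) * (d - c) := by
      rw [abs_le]
      have h1 : sI * (d - c) ≤ ψ (Φ ξ) * (d - c) := mul_le_mul_of_nonneg_right hψξ1 hΔ0
      have h2 : ψ (Φ ξ) * (d - c) ≤ sS * (d - c) := mul_le_mul_of_nonneg_right hψξ2 hΔ0
      have h3 : (sS - sI) * (d - c) = sS * (d - c) - sI * (d - c) := by ring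
      constructor <;> linarith
    have hA1 : S - f (Φ ξ) ≤ ε' := by
      have : S - ε' < f (Φ ξ) := hyS
      linarith
    have hA2 : 0 ≤ S - f (Φ ξ) := by
      have : (f ∘ Φ) ξ = f (Φ ξ) := rfl
      linarith [hfξS]
    have B1 : (S - f (Φ ξ)) * V ≤ ε' * (Mψ * (d - c)) := by
      calc (S - f (Φ ξ)) * V ≤ (S - f (Φ ξ)) * |V| :=
            mul_le_mul_of_nonneg_left (le_abs_self V) hA2
        _ ≤ ε' * (Mψ * (d - c)) := mul_le_mul hA1 hVabs (abs_nonneg V) hε'0.le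
    have B2 : f (Φ ξ) * (V - ψ (Φ ξ) * (d - c)) ≤ Mf * ((sS - sI) * (d - c)) := by
      calc f (Φ ξ) * (V - ψ (Φ ξ) * (d - c))
          ≤ |f (Φ ξ) * (V - ψ (Φ ξ) * (d - c))| := le_abs_self _
        _ = |f (Φ ξ)| * |V - ψ (Φ ξ) * (d - c)| := abs_mul _ _
        _ ≤ Mf * ((sS - sI) * (d - c)) := mul_le_mul hfξ hoscb (abs_nonneg _) hMf0
    have B3 : f (Φ ξ) * ψ (Φ ξ) * (d - c) ≤
        sSup ((fun x => f (Φ x) * ψ (Φ x)) '' Set.Icc (p k) (p (k + 1))) * (d - c) :=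
      mul_le_mul_of_nonneg_right hprod hΔ0
    rw [hV, hosc]
    have expand : S * V =
        (S - f (Φ ξ)) * V + f (Φ ξ) * (V - ψ (Φ ξ) * (d - c)) +
          f (Φ ξ) * ψ (Φ ξ) * (d - c) := by ring
    linarith [B1, B2, B3, expand.le]
  -- sum up
  have hsum := Finset.sum_le_sum key
  have htel : ∑ k ∈ Finset.range n, (Φ (p (k + 1)) - Φ (p k)) = Φ b - Φ a := by
    rw [Finset.sum_range_sub (fun i => Φ (p i)), hP.1, hP.2.1]
  have hlast : ε' * Mψ * (Φ b - Φ a) ≤ ε := by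
    have h1 : ε' * Mψ * (Φ b - Φ a) = ε' * D := by rw [hD]; ring
    have h2 : ε' * D ≤ ε' * (D + 1) := by nlinarith
    have h3 : ε' * (D + 1) = ε := by
      rw [hε'def]; field_simp
    linarith
  unfold upperSum
  refine le_trans hsum ?_
  rw [Finset.sum_add_distrib, Finset.sum_add_distrib, ← Finset.mul_sum, ← Finset.mul_sum, htel]
  linarith [hlast]
end
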